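/- arXiv:1805.12405 — 8 statements merged into one kernel-verified Lean document; each statement's English description precedes it below -/
import Mathlib

section
/- For every binary word w there exists a unique binary word w' of the same length such that for all 0 ≤ k ≤ |w|, F_a(w,k) = F_a(w',k) = P_a(w',k), where P_a(w',k) is the number of a's in the prefix of w' of length k. This word w' is called the prefix normal form of w (with respect to a). -/
/- Binary words are `List Bool`, with letter `a = false` and `b = true`
   (so that `a < b` in the `Bool` order). -/

/-- number of `a`'s in the prefix of length `k` -/
def Pa (w : List Bool) (k : ℕ) : ℕ := (w.take k).count false

/-- number of `b`'s in the prefix of length `k` -/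
def Pb (w : List Bool) (k : ℕ) : ℕ := (w.take k).count true

/-- maximum number of `a`'s in a factor of `w` of length `k` -/
noncomputable def Fa (w : List Bool) (k : ℕ) : ℕ :=
  sSup {n | ∃ v : List Bool, v <:+: w ∧ v.length = k ∧ v.count false = n}

/-- maximum number of `b`'s in a factor of `w` of length `k` -/
noncomputable def Fb (w : List Bool) (k : ℕ) : ℕ :=
  sSup {n | ∃ v : List Bool, v <:+: w ∧ v.length = k ∧ v.count true = n}

/-- minimum number of `a`'s in a factor of `w` of length `k` -/
noncomputable def fa (w : List Bool) (k : ℕ) : ℕ :=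
  sInf {n | ∃ v : List Bool, v <:+: w ∧ v.length = k ∧ v.count false = n}

/-- `w` is prefix normal w.r.t. `a`: no factor has more `a`'s than the prefix
    of the same length -/
def PrefixNormal (w : List Bool) : Prop :=
  ∀ v : List Bool, v <:+: w → v.count false ≤ Pa w v.length

/-- position of the `i`-th `a` in `w` -/
noncomputable def posA (w : List Bool) (i : ℕ) : ℕ := sInf {k | Pa w k = i}

/-- `u` is the prefix normal form of `w` w.r.t. `a` -/
def IsPNFa (w u : List Bool) : Prop :=
  u.length = w.length ∧ ∀ k ≤ w.length, Pa u k = Fa w k ∧ Fa u k = Fa w k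

/-- `u` is the prefix normal form of `w` w.r.t. `b` -/
def IsPNFb (w u : List Bool) : Prop :=
  u.length = w.length ∧ ∀ k ≤ w.length, Pb u k = Fb w k ∧ Fb u k = Fb w k

/-- the Parikh set of `w`: Parikh vectors `(|v|_a, |v|_b)` of factors of `w` -/
def ParikhSet (w : List Bool) : Set (ℕ × ℕ) :=
  {p | ∃ v : List Bool, v <:+: w ∧ p = (v.count false, v.count true)}

/-- Lyndon word: strictly lexicographically smaller than each proper nonempty suffix -/
def IsLyndon (w : List Bool) : Prop :=
  w ≠ [] ∧ ∀ v : List Bool, v <:+ w → v ≠ [] → v ≠ w → List.Lex (· < ·) w v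

/-- pre-necklace: a power of the letter `b`, or a prefix of a Lyndon word -/
def PreNecklace (w : List Bool) : Prop :=
  (∃ n, w = List.replicate n true) ∨ ∃ v, IsLyndon v ∧ w <+: v

/-!
The function `k ↦ Fa w k` vanishes at `0`, grows by `0` or `1` at each step, and is
subadditive (split a factor of length `i + k` into pieces of lengths `i` and `k`).
So it is the prefix-count function of exactly one word `pnf w`: the word whose `k`-th
letter is `a` iff `Fa w` increases from `k` to `k + 1`. A factor of `pnf w` at
position `i` of length `k` then has `Fa w (i + k) - Fa w i ≤ Fa w k` letters `a`, so
`pnf w` has the same maximal factor counts as `w`.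
-/

theorem List.IsInfix.exists_infix_length_succ {α : Type*} {v w : List α} (h : v <:+: w)
    (hlt : v.length < w.length) :
    ∃ u, v <:+: u ∧ u <:+: w ∧ u.length = v.length + 1 := by
  obtain ⟨s, t, rfl⟩ := h
  rcases t with _ | ⟨c, t⟩
  · rcases s.eq_nil_or_concat with rfl | ⟨s, c, rfl⟩
    · simp at hlt
    · exact ⟨c :: v, (List.suffix_cons c v).isInfix, ⟨s, [], by simp⟩, rfl⟩
  · exact ⟨v ++ [c], (List.prefix_append v [c]).isInfix, ⟨s, t, by simp⟩, by simp⟩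

section FactorCount

variable {w : List Bool} {k : ℕ}

theorem bddAbove_factor_counts (w : List Bool) (k : ℕ) :
    BddAbove {n | ∃ v : List Bool, v <:+: w ∧ v.length = k ∧ v.count false = n} := by
  refine ⟨k, ?_⟩
  rintro n ⟨v, -, rfl, rfl⟩
  exact List.count_le_length

theorem count_false_le_Fa {v : List Bool} (h : v <:+: w) : v.count false ≤ Fa w v.length :=
  le_csSup (bddAbove_factor_counts w v.length) ⟨v, h, rfl, rfl⟩

theorem exists_infix_count_false_eq_Fa (hk : k ≤ w.length) :
    ∃ v : List Bool, v <:+: w ∧ v.length = k ∧ v.count false = Fa w k :=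
  Nat.sSup_mem (s := {n | ∃ v : List Bool, v <:+: w ∧ v.length = k ∧ v.count false = n})
    ⟨_, w.take k, (w.take_prefix k).isInfix, by simp [hk], rfl⟩ (bddAbove_factor_counts w k)

theorem Pa_le_Fa (hk : k ≤ w.length) : Pa w k ≤ Fa w k := by
  simpa [Pa, hk] using count_false_le_Fa (w.take_prefix k).isInfix

theorem Fa_zero (w : List Bool) : Fa w 0 = 0 := by
  obtain ⟨v, -, hl, hc⟩ := exists_infix_count_false_eq_Fa (w := w) (Nat.zero_le _)
  simp [← hc, List.length_eq_zero_iff.mp hl]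

theorem Fa_le_self (hk : k ≤ w.length) : Fa w k ≤ k := by
  obtain ⟨v, -, rfl, hc⟩ := exists_infix_count_false_eq_Fa hk
  exact hc ▸ List.count_le_length

theorem Fa_add_le {i : ℕ} (h : i + k ≤ w.length) : Fa w (i + k) ≤ Fa w i + Fa w k := by
  obtain ⟨v, hv, hl, hc⟩ := exists_infix_count_false_eq_Fa h
  have htake := count_false_le_Fa ((v.take_prefix i).isInfix.trans hv)
  have hdrop := count_false_le_Fa ((v.drop_suffix i).isInfix.trans hv)
  simp only [List.length_take, List.length_drop, hl, Nat.add_sub_cancel_left,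
    min_eq_left (Nat.le_add_right i k)] at htake hdrop
  rw [← hc, ← List.take_append_drop i v, List.count_append]
  omega

theorem Fa_succ_le (h : k + 1 ≤ w.length) : Fa w (k + 1) ≤ Fa w k + 1 :=
  (Fa_add_le h).trans (Nat.add_le_add_left (Fa_le_self (by omega : 1 ≤ w.length)) _)

theorem Fa_le_Fa_succ (h : k + 1 ≤ w.length) : Fa w k ≤ Fa w (k + 1) := by
  obtain ⟨v, hv, rfl, hc⟩ := exists_infix_count_false_eq_Fa (w := w) (k := k) (by omega)
  obtain ⟨u, hvu, huw, hl⟩ := hv.exists_infix_length_succ (by omega)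
  calc Fa w v.length = v.count false := hc.symm
    _ ≤ u.count false := hvu.count_le false
    _ ≤ Fa w (v.length + 1) := hl ▸ count_false_le_Fa huw

end FactorCount

theorem Pa_succ {u : List Bool} {k : ℕ} (h : k < u.length) :
    Pa u (k + 1) = Pa u k + if u[k] = false then 1 else 0 := by
  rw [Pa, Pa, List.take_add_one, List.getElem?_eq_getElem h, List.count_append]
  cases u[k] <;> simp

theorem Pa_append_append (s v t : List Bool) :
    Pa (s ++ v ++ t) (s.length + v.length) = s.count false + v.count false := by
  simp [Pa, List.take_append, List.take_of_length_le]

theorem eq_of_Pa_eq {u v : List Bool} (hl : u.length = v.length)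
    (h : ∀ k ≤ u.length, Pa u k = Pa v k) : u = v := by
  refine List.ext_getElem hl fun i hu hv => ?_
  have hsucc := h (i + 1) hu
  rw [Pa_succ hu, Pa_succ hv, h i hu.le] at hsucc
  cases hui : u[i] <;> cases hvi : v[i] <;> simp_all

noncomputable def pnf (w : List Bool) : List Bool :=
  (List.range w.length).map fun k => decide (Fa w (k + 1) = Fa w k)

section PrefixNormalForm

variable {w : List Bool} {k : ℕ}

theorem length_pnf (w : List Bool) : (pnf w).length = w.length := by
  simp [pnf]

theorem Pa_pnf (hk : k ≤ w.length) : Pa (pnf w) k = Fa w k := by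
  induction k with
  | zero => simp [Pa, Fa_zero]
  | succ k ih =>
    have hstep := Fa_succ_le hk
    have hmono := Fa_le_Fa_succ hk
    rw [Pa_succ (by rw [length_pnf]; omega), ih (by omega)]
    by_cases he : Fa w (k + 1) = Fa w k
    · simp [pnf, he]
    · simp [pnf, he]
      omega

theorem Fa_pnf (hk : k ≤ w.length) : Fa (pnf w) k = Fa w k := by
  refine le_antisymm ?_ (Pa_pnf hk ▸ Pa_le_Fa (by rwa [length_pnf]))
  obtain ⟨v, ⟨s, t, hst⟩, rfl, hc⟩ :=
    exists_infix_count_false_eq_Fa (w := pnf w) (k := k) (by rwa [length_pnf])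
  have hlen : s.length + v.length + t.length = w.length := by
    rw [← length_pnf w, ← hst]
    simp only [List.length_append]
  have hs : Pa (pnf w) s.length = s.count false := by
    rw [Pa, ← hst, List.append_assoc, List.take_left]
  have hsv := Pa_append_append s v t
  rw [hst, Pa_pnf (by omega)] at hsv
  rw [Pa_pnf (by omega)] at hs
  have hsub := Fa_add_le (w := w) (i := s.length) (k := v.length) (by omega)
  omega

theorem eq_pnf_of_Pa_eq_Fa {u : List Bool} (hl : u.length = w.length)
    (h : ∀ k ≤ w.length, Pa u k = Fa w k) : u = pnf w :=
  eq_of_Pa_eq (hl.trans (length_pnf w).symm) fun k hk =>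
    (h k (hl ▸ hk)).trans (Pa_pnf (hl ▸ hk)).symm

end PrefixNormalForm

theorem stmt2 (w : List Bool) :
    ∃! w' : List Bool, w'.length = w.length ∧
      ∀ k ≤ w.length, Fa w k = Fa w' k ∧ Fa w' k = Pa w' k := by
  refine ⟨pnf w, ⟨length_pnf w, fun k hk => ⟨(Fa_pnf hk).symm, ?_⟩⟩, ?_⟩
  · rw [Fa_pnf hk, Pa_pnf hk]
  · rintro u ⟨hl, hu⟩
    exact eq_pnf_of_Pa_eq_Fa hl fun k hk => ((hu k hk).1.trans (hu k hk).2).symm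
end

section
/- Two binary words w and w' have the same Parikh set of factors, Π(w) = Π(w'), if and only if PNF_a(w) = PNF_a(w') and PNF_b(w) = PNF_b(w'). -/
/-
Sliding a window of length `k` one position along `w` changes its number of `a`'s by at most
one, so the `a`-counts of the length-`k` factors of `w` form an interval. As the `b`-count of such
a factor is `k` minus its `a`-count, this interval is `[k - F_b(w,k), F_a(w,k)]`; hence `Π(w)` is
determined by `|w|`, `F_a(w,·)` and `F_b(w,·)`, and conversely these are read off `Π(w)`.
A binary word is determined by the `a`-counts of its prefixes, so `PNF_a(w)` determines and is
determined by `|w|` and `F_a(w,·)`, and likewise for `b`.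
-/

lemma exists_eq_of_steps_le_one {f : ℕ → ℕ} {n : ℕ}
    (hstep : ∀ i < n, f (i + 1) ≤ f i + 1 ∧ f i ≤ f (i + 1) + 1)
    {i j p : ℕ} (hi : i ≤ n) (hj : j ≤ n) (hip : f i ≤ p) (hpj : p ≤ f j) :
    ∃ m ≤ n, f m = p := by
  induction n generalizing i j with
  | zero =>
    obtain rfl : i = 0 := by omega
    obtain rfl : j = 0 := by omega
    exact ⟨0, le_rfl, by omega⟩
  | succ n ih =>
    by_cases hn : f (n + 1) = p
    · exact ⟨n + 1, le_rfl, hn⟩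
    have hs := hstep n n.lt_succ_self
    obtain ⟨i', hi', hi'p⟩ : ∃ i' ≤ n, f i' ≤ p := by
      rcases Nat.lt_or_ge i (n + 1) with h | h
      · exact ⟨i, by omega, hip⟩
      · obtain rfl : i = n + 1 := by omega
        exact ⟨n, le_rfl, by omega⟩
    obtain ⟨j', hj', hpj'⟩ : ∃ j' ≤ n, p ≤ f j' := by
      rcases Nat.lt_or_ge j (n + 1) with h | h
      · exact ⟨j, by omega, hpj⟩
      · obtain rfl : j = n + 1 := by omega
        exact ⟨n, le_rfl, by omega⟩
    obtain ⟨m, hm, hfm⟩ := ih (fun k hk => hstep k (by omega)) hi' hj' hi'p hpj'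
    exact ⟨m, by omega, hfm⟩

section Window

variable {α : Type*}

lemma count_take_drop_succ_le [BEq α] (w : List α) (c : α) (i k : ℕ) :
    ((w.drop (i + 1)).take k).count c ≤ ((w.drop i).take k).count c + 1 ∧
      ((w.drop i).take k).count c ≤ ((w.drop (i + 1)).take k).count c + 1 := by
  have hfront : ((w.drop i).take (k + 1)).count c =
      ((w.drop i).take 1).count c + ((w.drop (i + 1)).take k).count c := by
    rw [Nat.add_comm, List.take_add, List.count_append, List.drop_drop]
  have hback : ((w.drop i).take (k + 1)).count c =
      ((w.drop i).take k).count c + (((w.drop i).drop k).take 1).count c := by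
    rw [List.take_add, List.count_append]
  have hone : ∀ l : List α, (l.take 1).count c ≤ 1 := fun l =>
    List.count_le_length.trans (by simp)
  have := hone (w.drop i)
  have := hone ((w.drop i).drop k)
  omega

lemma take_drop_infix (w : List α) (i k : ℕ) : (w.drop i).take k <:+: w :=
  ((w.drop i).take_prefix k).isInfix.trans (w.drop_suffix i).isInfix

lemma exists_eq_take_drop_of_infix {v w : List α} (h : v <:+: w) :
    ∃ i, i + v.length ≤ w.length ∧ (w.drop i).take v.length = v := by
  obtain ⟨s, t, rfl⟩ := h
  refine ⟨s.length, by simp, ?_⟩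
  rw [List.append_assoc, List.drop_left, List.take_left]

end Window

section FactorCounts

def factorCounts (w : List Bool) (c : Bool) (k : ℕ) : Set ℕ :=
  {n | ∃ v : List Bool, v <:+: w ∧ v.length = k ∧ v.count c = n}

variable {w w' : List Bool} {c : Bool} {k : ℕ}

lemma mem_factorCounts_iff {n : ℕ} :
    n ∈ factorCounts w c k ↔ ∃ i, i + k ≤ w.length ∧ ((w.drop i).take k).count c = n := by
  constructor
  · rintro ⟨v, hv, rfl, rfl⟩
    obtain ⟨i, hi, hvi⟩ := exists_eq_take_drop_of_infix hv
    exact ⟨i, hi, congrArg _ hvi⟩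
  · rintro ⟨i, hi, rfl⟩
    refine ⟨_, take_drop_infix w i k, ?_, rfl⟩
    simp only [List.length_take, List.length_drop]
    omega

lemma sSup_factorCounts_mem (hk : k ≤ w.length) :
    sSup (factorCounts w c k) ∈ factorCounts w c k :=
  Nat.sSup_mem ⟨_, w.take k, (w.take_prefix k).isInfix, by simp [hk], rfl⟩
    ⟨k, by rintro n ⟨v, -, rfl, rfl⟩; exact List.count_le_length⟩

lemma count_le_sSup_factorCounts {v : List Bool} (hv : v <:+: w) :
    v.count c ≤ sSup (factorCounts w c v.length) :=
  le_csSup ⟨v.length, by rintro n ⟨v', -, hl, rfl⟩; exact hl ▸ List.count_le_length⟩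
    ⟨v, hv, rfl, rfl⟩

lemma factorCounts_subset_of_parikhSet_subset (h : ParikhSet w ⊆ ParikhSet w') :
    factorCounts w c k ⊆ factorCounts w' c k := by
  rintro n ⟨v, hv, rfl, rfl⟩
  obtain ⟨v', hv', hvv'⟩ := h ⟨v, hv, rfl⟩
  simp only [Prod.mk.injEq] at hvv'
  have := v.count_false_add_count_true
  have := v'.count_false_add_count_true
  refine ⟨v', hv', by omega, ?_⟩
  cases c <;> omega

end FactorCounts

theorem mem_parikhSet_iff {w : List Bool} {p q : ℕ} :
    (p, q) ∈ ParikhSet w ↔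
      p + q ≤ w.length ∧ p ≤ Fa w (p + q) ∧ q ≤ Fb w (p + q) := by
  constructor
  · rintro ⟨v, hv, hpq⟩
    simp only [Prod.mk.injEq] at hpq
    obtain ⟨rfl, rfl⟩ := hpq
    rw [List.count_false_add_count_true]
    exact ⟨hv.length_le, count_le_sSup_factorCounts hv, count_le_sSup_factorCounts hv⟩
  · rintro ⟨hk, hp, hq⟩
    obtain ⟨i, hi, hci⟩ : ∃ i, i + (p + q) ≤ w.length ∧
        ((w.drop i).take (p + q)).count false = Fa w (p + q) :=
      mem_factorCounts_iff.1 (sSup_factorCounts_mem hk)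
    obtain ⟨j, hj, hcj⟩ : ∃ j, j + (p + q) ≤ w.length ∧
        ((w.drop j).take (p + q)).count true = Fb w (p + q) :=
      mem_factorCounts_iff.1 (sSup_factorCounts_mem hk)
    have hlen : ∀ m, m + (p + q) ≤ w.length → ((w.drop m).take (p + q)).length = p + q := by
      intro m hm; simp only [List.length_take, List.length_drop]; omega
    -- the window with the most `b`'s has at most `p` letters `a`, the one with the most `a`'s
    -- has at least `p`
    have hcountj := ((w.drop j).take (p + q)).count_false_add_count_true
    rw [hlen j hj] at hcountj
    obtain ⟨m, hm, hcm⟩ := exists_eq_of_steps_le_one (p := p)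
      (f := fun m => ((w.drop m).take (p + q)).count false)
      (fun t _ => count_take_drop_succ_le w false t (p + q))
      (show j ≤ w.length - (p + q) by omega) (show i ≤ w.length - (p + q) by omega)
      (by omega) (by omega)
    have hcountm := ((w.drop m).take (p + q)).count_false_add_count_true
    rw [hlen m (by omega)] at hcountm
    exact ⟨_, take_drop_infix w m (p + q), Prod.ext hcm.symm (by omega)⟩

lemma length_le_of_parikhSet_subset {w w' : List Bool} (h : ParikhSet w ⊆ ParikhSet w') :
    w.length ≤ w'.length := by
  obtain ⟨v, hv, hwv⟩ := h ⟨w, List.infix_refl w, rfl⟩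
  simp only [Prod.mk.injEq] at hwv
  rw [← w.count_false_add_count_true, hwv.1, hwv.2, v.count_false_add_count_true]
  exact hv.length_le

theorem parikhSet_eq_iff {w w' : List Bool} :
    ParikhSet w = ParikhSet w' ↔ w.length = w'.length ∧
      (∀ k ≤ w.length, Fa w k = Fa w' k) ∧ ∀ k ≤ w.length, Fb w k = Fb w' k := by
  constructor
  · intro h
    have hcounts (c : Bool) (k : ℕ) : factorCounts w c k = factorCounts w' c k :=
      (factorCounts_subset_of_parikhSet_subset h.le).antisymm
        (factorCounts_subset_of_parikhSet_subset h.ge)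
    exact ⟨(length_le_of_parikhSet_subset h.le).antisymm (length_le_of_parikhSet_subset h.ge),
      fun k _ => congrArg sSup (hcounts false k), fun k _ => congrArg sSup (hcounts true k)⟩
  · rintro ⟨hlen, hFa, hFb⟩
    ext ⟨p, q⟩
    rw [mem_parikhSet_iff, mem_parikhSet_iff, ← hlen]
    by_cases hk : p + q ≤ w.length
    · rw [hFa _ hk, hFb _ hk]
    · simp only [hk, false_and]

lemma List.eq_of_count_take_eq {x y : List Bool} {c : Bool} (hlen : x.length = y.length)
    (h : ∀ k ≤ x.length, (x.take k).count c = (y.take k).count c) : x = y := by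
  refine List.ext_getElem hlen fun i hx hy => ?_
  have hi := h (i + 1) hx
  rw [List.take_add_one, List.take_add_one, List.count_append, List.count_append,
    h i hx.le, List.getElem?_eq_getElem hx, List.getElem?_eq_getElem hy] at hi
  cases hxi : x[i] <;> cases hyi : y[i] <;> cases c <;> simp_all

lemma eq_iff_of_count_take_eq_sSup_factorCounts {w w' u u' : List Bool} {c : Bool}
    (hu : u.length = w.length) (hu' : u'.length = w'.length)
    (hcu : ∀ k ≤ w.length, (u.take k).count c = sSup (factorCounts w c k))
    (hcu' : ∀ k ≤ w'.length, (u'.take k).count c = sSup (factorCounts w' c k)) :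
    u = u' ↔ w.length = w'.length ∧
      ∀ k ≤ w.length, sSup (factorCounts w c k) = sSup (factorCounts w' c k) := by
  constructor
  · rintro rfl
    have hlen : w.length = w'.length := hu.symm.trans hu'
    exact ⟨hlen, fun k hk => (hcu k hk).symm.trans (hcu' k (hlen ▸ hk))⟩
  · rintro ⟨hlen, hsup⟩
    refine List.eq_of_count_take_eq (c := c) (by omega) fun k hk => ?_
    rw [hcu k (by omega), hcu' k (by omega), hsup k (by omega)]

lemma IsPNFa.eq_iff {w w' u u' : List Bool} (hu : IsPNFa w u) (hu' : IsPNFa w' u') :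
    u = u' ↔ w.length = w'.length ∧ ∀ k ≤ w.length, Fa w k = Fa w' k :=
  eq_iff_of_count_take_eq_sSup_factorCounts hu.1 hu'.1 (fun k hk => (hu.2 k hk).1)
    (fun k hk => (hu'.2 k hk).1)

lemma IsPNFb.eq_iff {w w' v v' : List Bool} (hv : IsPNFb w v) (hv' : IsPNFb w' v') :
    v = v' ↔ w.length = w'.length ∧ ∀ k ≤ w.length, Fb w k = Fb w' k :=
  eq_iff_of_count_take_eq_sSup_factorCounts hv.1 hv'.1 (fun k hk => (hv.2 k hk).1)
    (fun k hk => (hv'.2 k hk).1)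

theorem stmt8 (w w' u u' v v' : List Bool)
    (hu : IsPNFa w u) (hu' : IsPNFa w' u')
    (hv : IsPNFb w v) (hv' : IsPNFb w' v') :
    ParikhSet w = ParikhSet w' ↔ u = u' ∧ v = v' := by
  rw [parikhSet_eq_iff, hu.eq_iff hu', hv.eq_iff hv']
  constructor
  · rintro ⟨hlen, hFa, hFb⟩
    exact ⟨⟨hlen, hFa⟩, hlen, hFb⟩
  · rintro ⟨⟨hlen, hFa⟩, -, hFb⟩
    exact ⟨hlen, hFa, hFb⟩
end

section
/- A binary word w is prefix normal (with respect to a) if and only if for all 0 ≤ i ≤ j ≤ |w|, P_a(w,j) − P_a(w,i) ≤ P_a(w,j−i), where P_a(w,k) is the number of a's in the prefix of w of length k. -/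
theorem stmt10 (w : List Bool) :
    PrefixNormal w ↔
      ∀ i j : ℕ, i ≤ j → j ≤ w.length → Pa w j - Pa w i ≤ Pa w (j - i) := by
  constructor
  · intro h i j hij hj
    have hinf : (w.take j).drop i <:+: w := by
      exact ((w.take j).drop_suffix i).isInfix.trans (w.take_prefix j).isInfix
    have hlen : ((w.take j).drop i).length = j - i := by
      simp [List.length_drop, List.length_take, Nat.min_eq_left hj]
    have hcount : ((w.take j).drop i).count false = Pa w j - Pa w i := by
      have : (w.take j).count false = ((w.take j).take i).count false
          + ((w.take j).drop i).count false := by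
        rw [← List.count_append, List.take_append_drop]
      rw [List.take_take, Nat.min_eq_left hij] at this
      simp only [Pa]
      omega
    have := h _ hinf
    rwa [hlen, hcount] at this
  · intro h v hv
    obtain ⟨s, t, hst⟩ := hv
    have hi : w.take s.length = s := by
      rw [← hst]; simp
    have hj : w.take (s.length + v.length) = s ++ v := by
      rw [← hst, List.take_append]
      simp [List.take_append, List.take_of_length_le]
    have hjle : s.length + v.length ≤ w.length := by
      rw [← hst]; simp
    have := h s.length (s.length + v.length) (by omega) hjle
    simp only [Pa, hi, hj, List.count_append, Nat.add_sub_cancel_left] at this ⊢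
    omega
end

section
/- A binary word w is prefix normal (with respect to a) if and only if every factor v of w with |v|_a = i satisfies |v| ≥ pos_a(w,i), where pos_a(w,i) is the position of the i-th occurrence of a in w (i.e., the least k with |w_1⋯w_k|_a = i). -/
/-! `posA w` is the lower adjoint of the prefix count `Pa w` on `[0, |w|_a]`: since `Pa w` is
monotone, starts at `0` and grows by at most one per letter, it hits every value up to `|w|_a`,
so `posA w i ≤ k ↔ i ≤ Pa w k`. The theorem is this equivalence applied to `i = |v|_a`, `k = |v|`. -/

namespace Pa

variable (w : List Bool)

@[simp]
lemma zero : Pa w 0 = 0 := by simp [Pa]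

@[simp]
lemma length : Pa w w.length = w.count false := by simp [Pa]

lemma monotone : Monotone (Pa w) := fun _ _ hkm =>
  ((List.take_prefix_take_left hkm).sublist).count_le false

lemma succ_le (k : ℕ) : Pa w (k + 1) ≤ Pa w k + 1 := by
  have hstep : ((w.drop k).take 1).count false ≤ 1 :=
    List.count_le_length.trans (List.length_take_le _ _)
  rw [Pa, List.take_add, List.count_append]
  exact Nat.add_le_add_left hstep _

lemma exists_eq_of_le {i n : ℕ} (hi : i ≤ Pa w n) : ∃ k ≤ n, Pa w k = i := by
  induction n with
  | zero => exact ⟨0, le_rfl, by simp_all⟩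
  | succ n ih =>
    by_cases hin : i ≤ Pa w n
    · obtain ⟨k, hkn, hk⟩ := ih hin
      exact ⟨k, hkn.trans n.le_succ, hk⟩
    · exact ⟨n + 1, le_rfl, by have := succ_le w n; omega⟩

end Pa

namespace posA

variable {w : List Bool} {i : ℕ}

lemma Pa_eq (hi : i ≤ w.count false) : Pa w (posA w i) = i := by
  obtain ⟨k, -, hk⟩ := Pa.exists_eq_of_le w (i := i) (n := w.length) (by simpa using hi)
  exact Nat.sInf_mem (s := {k | Pa w k = i}) ⟨k, hk⟩

lemma le_iff (hi : i ≤ w.count false) (k : ℕ) : posA w i ≤ k ↔ i ≤ Pa w k := by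
  constructor
  · intro hk
    exact Pa_eq hi ▸ Pa.monotone w hk
  · intro hk
    obtain ⟨k', hk'k, hk'⟩ := Pa.exists_eq_of_le w hk
    exact (Nat.sInf_le (s := {k | Pa w k = i}) hk').trans hk'k

end posA

theorem stmt11 (w : List Bool) :
    PrefixNormal w ↔
      ∀ v : List Bool, v <:+: w → posA w (v.count false) ≤ v.length := by
  refine forall₂_congr fun v hv => ?_
  exact (posA.le_iff (hv.sublist.count_le false) v.length).symm
end

section
/- A binary word w is prefix normal (with respect to a) if and only if for all i,j ≥ 1 with i + j − 1 ≤ |w|_a, it holds that pos_a(w,i) + pos_a(w,j) − 1 ≤ pos_a(w, i+j−1). -/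
/-! The `a`-counting function `Pa w` starts at `0`, is monotone and grows by at most one per
step, so `posA w` is its lower adjoint on `[0, |w|_a]`: `posA w i ≤ m ↔ i ≤ Pa w m`.
Prefix normality is subadditivity `Pa w (d + n) ≤ Pa w d + Pa w n`, since the factor of length
`n` at offset `d` contains `Pa w (d + n) - Pa w d` letters `a`. Through the adjunction,
subadditivity of `Pa w` becomes exactly the inequality
`posA w i + posA w j - 1 ≤ posA w (i + j - 1)`: take `d = posA w i - 1` in one direction and
`i = Pa w d + 1` in the other. -/

lemma Pa_add (w : List Bool) (d n : ℕ) :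
    Pa w (d + n) = Pa w d + ((w.drop d).take n).count false := by
  rw [Pa, Pa, List.take_add, List.count_append]

lemma Pa_zero (w : List Bool) : Pa w 0 = 0 := by
  simp [Pa]

lemma Pa_mono (w : List Bool) : Monotone (Pa w) := fun _ _ h =>
  (List.take_sublist_take_left h).count_le false

lemma Pa_succ_le (w : List Bool) (k : ℕ) : Pa w (k + 1) ≤ Pa w k + 1 := by
  have : ((w.drop k).take 1).count false ≤ 1 :=
    List.count_le_length.trans (List.length_take_le _ _)
  rw [Pa_add]
  omega

lemma Pa_length (w : List Bool) : Pa w w.length = w.count false := by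
  simp [Pa]

lemma Pa_le_count (w : List Bool) (k : ℕ) : Pa w k ≤ w.count false :=
  (List.take_sublist _ _).count_le false

lemma exists_Pa_eq_of_le_Pa (w : List Bool) {i m : ℕ} (h : i ≤ Pa w m) :
    ∃ k ≤ m, Pa w k = i := by
  induction m with
  | zero => exact ⟨0, le_rfl, by rw [Pa_zero] at h ⊢; omega⟩
  | succ m ih =>
    by_cases him : i ≤ Pa w m
    · obtain ⟨k, hkm, hk⟩ := ih him
      exact ⟨k, hkm.trans m.le_succ, hk⟩
    · exact ⟨m + 1, le_rfl, by have := Pa_succ_le w m; omega⟩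

lemma Pa_posA (w : List Bool) {i : ℕ} (h : i ≤ w.count false) : Pa w (posA w i) = i := by
  obtain ⟨k, -, hk⟩ := exists_Pa_eq_of_le_Pa w (h.trans_eq (Pa_length w).symm)
  exact Nat.sInf_mem (s := {k | Pa w k = i}) ⟨k, hk⟩

-- Outside `[0, |w|_a]` the set defining `posA w i` is empty and `posA w i = 0`.
lemma posA_le_iff (w : List Bool) {i m : ℕ} (h : i ≤ w.count false) :
    posA w i ≤ m ↔ i ≤ Pa w m := by
  refine ⟨fun hm => Pa_posA w h ▸ Pa_mono w hm, fun hi => ?_⟩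
  obtain ⟨k, hkm, hk⟩ := exists_Pa_eq_of_le_Pa w hi
  exact (show posA w i ≤ k from Nat.sInf_le hk).trans hkm

lemma lt_posA_iff (w : List Bool) {i m : ℕ} (h : i ≤ w.count false) :
    m < posA w i ↔ Pa w m < i := by
  simpa only [not_le] using (posA_le_iff w h).not

lemma prefixNormal_iff_Pa_add_le (w : List Bool) :
    PrefixNormal w ↔ ∀ d n, Pa w (d + n) ≤ Pa w d + Pa w n := by
  constructor
  · intro hw d n
    have hfactor : ((w.drop d).take n).count false ≤ Pa w n :=
      (hw _ ((List.take_prefix _ _).isInfix.trans (List.drop_suffix _ _).isInfix)).trans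
        (Pa_mono w (List.length_take_le _ _))
    rw [Pa_add]
    omega
  · rintro hw v ⟨s, t, rfl⟩
    have hsplit := Pa_add (s ++ v ++ t) s.length v.length
    rw [show (s ++ v ++ t).drop s.length = v ++ t by simp, List.take_left] at hsplit
    have := hw s.length v.length
    omega

theorem stmt12 (w : List Bool) :
    PrefixNormal w ↔
      ∀ i j : ℕ, 1 ≤ i → 1 ≤ j → i + j - 1 ≤ w.count false →
        posA w i + posA w j - 1 ≤ posA w (i + j - 1) := by
  rw [prefixNormal_iff_Pa_add_le]
  constructor
  · intro hsub i j hi hj hij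
    set p := posA w i
    set r := posA w (i + j - 1)
    have hr : Pa w r = i + j - 1 := Pa_posA w hij
    have hpr : p ≤ r := (posA_le_iff w (by omega)).2 (by omega)
    have hp : 0 < p := (lt_posA_iff w (by omega)).2 (by rw [Pa_zero]; omega)
    have hbefore : Pa w (p - 1) < i := (lt_posA_iff w (by omega)).1 (by omega)
    have hsplit := hsub (p - 1) (r - (p - 1))
    rw [Nat.add_sub_cancel' (by omega)] at hsplit
    have hj_le : posA w j ≤ r - (p - 1) := (posA_le_iff w (by omega)).2 (by omega)
    omega
  · intro hpos d n
    by_contra! hlt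
    set c := Pa w (d + n) - Pa w d
    have hcount := Pa_le_count w (d + n)
    have hd : d < posA w (Pa w d + 1) := (lt_posA_iff w (by omega)).2 (by omega)
    have hdn : posA w (Pa w d + 1 + c - 1) ≤ d + n := (posA_le_iff w (by omega)).2 (by omega)
    have hc : posA w c ≤ n := by
      have := hpos (Pa w d + 1) c (by omega) (by omega) (by omega)
      omega
    have := (posA_le_iff w (by omega)).1 hc
    omega
end

section
/- For every binary word w and every n ≥ |w|, the word a^n w is prefix normal. In particular, every binary word is the suffix of infinitely many prefix normal words. -/
/- A factor `v` of `aⁿw` of length `k ≤ n` is matched by the all-`a` prefix. If `k > n ≥ |w|`,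
`v` is too long to lie inside `w`, so it reaches at least `k - n` letters into `w`: it contains
every `b` of the prefix `aⁿ (w.take (k - n))`, and having the same length it has no more `a`s. -/

open List

theorem List.take_sublist_of_infix_append {α : Type*} {v x w : List α} (hv : v <:+: x ++ w)
    (hw : w.length < v.length) : w.take (v.length - x.length) <+ v := by
  rcases infix_append_iff.mp hv with hx | hw' | ⟨l₁, l₂, rfl, hl₁, hl₂⟩
  · simp [Nat.sub_eq_zero_of_le hx.length_le]
  · exact absurd hw'.length_le (by omega)
  · have hlen : (l₁ ++ l₂).length - x.length ≤ l₂.length := by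
      simp only [length_append]
      have := hl₁.length_le
      omega
    obtain ⟨t, rfl⟩ := hl₂
    rw [take_append_of_le_length hlen]
    exact (take_sublist _ _).trans (sublist_append_right _ _)

theorem List.count_false_le_of_count_true_le {u v : List Bool} (hlen : u.length = v.length)
    (h : u.count true ≤ v.count true) : v.count false ≤ u.count false := by
  have := count_false_add_count_true u
  have := count_false_add_count_true v
  omega

theorem prefixNormal_replicate_false_append {w : List Bool} {n : ℕ} (hn : w.length ≤ n) :
    PrefixNormal (replicate n false ++ w) := by
  intro v hv
  rcases le_or_gt v.length n with hk | hk
  · have hprefix : Pa (replicate n false ++ w) v.length = v.length := by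
      simp [Pa, take_append, hk]
    rw [hprefix]
    exact count_le_length
  · have hvw : v.length ≤ n + w.length := by simpa using hv.length_le
    have hprefix : (replicate n false ++ w).take v.length =
        replicate n false ++ w.take (v.length - n) := by
      simp [take_append, hk.le]
    have hsub : w.take (v.length - n) <+ v := by
      simpa using take_sublist_of_infix_append hv (by omega)
    rw [Pa, hprefix]
    refine count_false_le_of_count_true_le ?_ ?_
    · simp only [length_append, length_replicate, length_take]
      omega
    · simpa [count_replicate] using hsub.count_le true

theorem stmt16 (w : List Bool) :
    (∀ n, w.length ≤ n → PrefixNormal (List.replicate n false ++ w)) ∧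
      {v : List Bool | PrefixNormal v ∧ w <:+ v}.Infinite := by
  refine ⟨fun n hn => prefixNormal_replicate_false_append hn, ?_⟩
  refine Set.infinite_of_injective_forall_mem
    (f := fun n : ℕ => List.replicate (n + w.length) false ++ w) (fun m n hmn => ?_)
    fun n => ⟨prefixNormal_replicate_false_append (by omega), suffix_append _ _⟩
  simpa using congrArg List.length hmn
end

section
/- Let w be a prefix normal word. Then wa is prefix normal if and only if for every 0 ≤ k < |w|, the suffix of w of length k contains strictly fewer a's than the prefix of w of length k+1. -/
lemma infix_concat_cases {v w : List Bool} (h : v <:+: w ++ [false]) :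
    v <:+: w ∨ v <:+ w ++ [false] := by
  obtain ⟨s, t, hst⟩ := h
  rcases List.eq_nil_or_concat t with rfl | ⟨t', x, rfl⟩
  · right
    exact ⟨s, by simpa using hst⟩
  · left
    have h2 : (s ++ v ++ t') ++ [x] = w ++ [false] := by
      simpa [List.append_assoc] using hst
    obtain ⟨h3, _⟩ := List.append_inj' h2 rfl
    exact ⟨s, t', by simpa [List.append_assoc] using h3⟩

lemma suffix_concat_cases {v w : List Bool} (h : v <:+ w ++ [false]) :
    v = [] ∨ ∃ s, s <:+ w ∧ v = s ++ [false] := by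
  rcases List.eq_nil_or_concat v with rfl | ⟨s, x, rfl⟩
  · left; rfl
  · right
    obtain ⟨t, ht⟩ := h
    have h2 : (t ++ s) ++ [x] = w ++ [false] := by
      simpa [List.append_assoc] using ht
    obtain ⟨h3, h4⟩ := List.append_inj' h2 rfl
    refine ⟨s, ⟨t, h3⟩, ?_⟩
    simp at h4
    simp [h4]

theorem stmt17 (w : List Bool) (h : PrefixNormal w) :
    PrefixNormal (w ++ [false]) ↔
      ∀ v : List Bool, v <:+ w → v.length < w.length →
        v.count false < Pa w (v.length + 1) := by
  constructor
  · intro hpn v hv hlen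
    have hinf : v ++ [false] <:+: w ++ [false] := by
      obtain ⟨t, ht⟩ := hv
      have : v ++ [false] <:+ w ++ [false] := ⟨t, by rw [← List.append_assoc, ht]⟩
      exact this.isInfix
    have := hpn _ hinf
    rw [List.length_append] at this
    simp only [List.count_append, List.count_singleton] at this
    have htake : Pa (w ++ [false]) (v.length + 1) = Pa w (v.length + 1) := by
      unfold Pa
      rw [List.take_append_of_le_length (by omega)]
    simp only [List.length_singleton] at this
    rw [htake] at this
    simp at this ⊢
    omega
  · intro hc v hv
    rcases infix_concat_cases hv with hinf | hsuf
    · have h1 := h v hinf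
      have hle : v.length ≤ w.length := hinf.length_le
      have : Pa w v.length ≤ Pa (w ++ [false]) v.length := by
        unfold Pa
        rw [List.take_append_of_le_length hle]
      omega
    · rcases suffix_concat_cases hsuf with rfl | ⟨s, hsw, rfl⟩
      · simp [Pa]
      · rcases eq_or_lt_of_le hsw.length_le with heq | hlt
        · have : s = w := List.IsSuffix.eq_of_length hsw heq
          subst this
          unfold Pa
          rw [List.take_of_length_le (by simp)]
        · have h2 := hc s hsw hlt
          have htake : Pa (w ++ [false]) (s ++ [false]).length = Pa w (s.length + 1) := by
            unfold Pa
            rw [List.length_append, List.length_singleton,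
              List.take_append_of_le_length (by omega)]
          rw [htake]
          simp only [List.count_append, List.count_singleton]
          simp
          omega
end

section
/- Let w be a prefix normal word containing at least one occurrence of a. Then the word w b^{|w|} is a Lyndon word (with respect to the order a < b). -/
/-!
Every proper suffix of `w b^n` has the form `s b^m` with `s` a suffix of `w`, so by prefix
normality its prefix `a`-counts are bounded by those of `w b^n`. Over `a < b` such domination
makes the suffix lexicographically larger, unless it is a prefix of `w b^n`; and that is ruled
out by counting `a`'s along the length of the suffix, because `w` begins with `a`.
-/

theorem Pa_mono_s18 (w : List Bool) {j k : ℕ} (hjk : j ≤ k) : Pa w j ≤ Pa w k :=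
  (List.take_prefix_take_left (l := w) hjk).sublist.count_le false

theorem Pa_le_Pa_append (s t : List Bool) (k : ℕ) : Pa s k ≤ Pa (s ++ t) k := by
  simp [Pa, List.take_append, List.count_append]

theorem Pa_append_replicate_true (s : List Bool) (m k : ℕ) :
    Pa (s ++ List.replicate m true) k = Pa s k := by
  simp [Pa, List.take_append, List.count_replicate]

theorem Pa_of_length_le {s : List Bool} {k : ℕ} (hk : s.length ≤ k) :
    Pa s k = s.count false := by
  rw [Pa, List.take_of_length_le hk]

theorem PrefixNormal.Pa_le_of_infix {w s : List Bool} (hw : PrefixNormal w) (hs : s <:+: w)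
    (k : ℕ) : Pa s k ≤ Pa w k :=
  (hw _ ((List.take_prefix k s).isInfix.trans hs)).trans (Pa_mono_s18 w (List.length_take_le k s))

theorem PrefixNormal.Pa_one_pos {w : List Bool} (hw : PrefixNormal w) (ha : 0 < w.count false) :
    0 < Pa w 1 := by
  obtain ⟨s, t, rfl⟩ := List.append_of_mem (List.count_pos_iff.mp ha)
  exact hw [false] ⟨s, t, by simp⟩

/-- At the first mismatch, `x` must carry the `a`. -/
theorem lex_of_Pa_le {x y : List Bool} (hPa : ∀ k, Pa y k ≤ Pa x k) (hxy : ¬ y <+: x) :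
    List.Lex (· < ·) x y := by
  induction x generalizing y with
  | nil =>
    obtain _ | ⟨b, y⟩ := y
    · exact absurd List.nil_prefix hxy
    · exact List.Lex.nil
  | cons a x ih =>
    obtain _ | ⟨b, y⟩ := y
    · exact absurd List.nil_prefix hxy
    by_cases hab : a = b
    · subst hab
      refine List.Lex.cons (ih (fun k => ?_) fun h => hxy (List.cons_prefix_cons.mpr ⟨rfl, h⟩))
      simpa [Pa, List.count_cons] using hPa (k + 1)
    · obtain rfl : a = false := by
        have h1 := hPa 1
        cases a <;> cases b <;> simp_all [Pa]
      obtain rfl : b = true := by simpa using Ne.symm hab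
      exact List.Lex.rel (by decide)

theorem not_prefix_of_Pa_lt {x y : List Bool} {k : ℕ} (hk : k ≤ y.length)
    (hlt : Pa y k < Pa x k) : ¬ y <+: x := fun hyx => by
  have htake : y.take k = x.take k := by
    rw [List.prefix_iff_eq_take.mp hyx, List.take_take, min_eq_left hk]
  exact hlt.ne (congrArg (List.count false) htake)

theorem count_false_drop_lt_Pa {w : List Bool} (hw : 0 < Pa w 1) {j : ℕ} (hj0 : 0 < j)
    (hj : j < 2 * w.length) : (w.drop j).count false < Pa w (2 * w.length - j) := by
  rcases le_or_gt j w.length with hjw | hwj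
  · -- the `a` opening `w` is cut off, and a window of length `2|w| - j` covers all of `w`
    have hsplit : w.count false = Pa w j + (w.drop j).count false := by
      rw [Pa, ← List.count_append, List.take_append_drop]
    have hcut := Pa_mono_s18 w (show 1 ≤ j from hj0)
    have hwin := Pa_mono_s18 w (show w.length ≤ 2 * w.length - j by omega)
    rw [Pa_of_length_le le_rfl] at hwin
    omega
  · rw [List.drop_eq_nil_of_le hwj.le, List.count_nil]
    exact hw.trans_le (Pa_mono_s18 w (by omega))

theorem PrefixNormal.lex_drop_append_replicate {w : List Bool} (hw : PrefixNormal w)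
    (ha : 0 < w.count false) {j : ℕ} (hj0 : 0 < j) (hj : j < 2 * w.length) :
    List.Lex (· < ·) (w ++ List.replicate w.length true)
      (List.drop j (w ++ List.replicate w.length true)) := by
  rw [List.drop_append, List.drop_replicate]
  set s := List.drop j w
  have hs : s.length ≤ 2 * w.length - j := by
    simp only [s, List.length_drop]
    omega
  have hlen : 2 * w.length - j ≤
      (s ++ List.replicate (w.length - (j - w.length)) true).length := by
    simp only [s, List.length_append, List.length_drop, List.length_replicate]
    omega
  refine lex_of_Pa_le (fun k => ?_) (not_prefix_of_Pa_lt hlen ?_)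
  · rw [Pa_append_replicate_true]
    exact (hw.Pa_le_of_infix (List.drop_suffix j w).isInfix k).trans (Pa_le_Pa_append _ _ _)
  · rw [Pa_append_replicate_true, Pa_of_length_le hs]
    exact (count_false_drop_lt_Pa (hw.Pa_one_pos ha) hj0 hj).trans_le (Pa_le_Pa_append _ _ _)

theorem stmt18 (w : List Bool) (h : PrefixNormal w) (ha : 0 < w.count false) :
    IsLyndon (w ++ List.replicate w.length true) := by
  have hw : w ≠ [] := by
    rintro rfl
    simp at ha
  refine ⟨by simp [hw], fun v hv hv0 hvW => ?_⟩
  have hlt : v.length < (w ++ List.replicate w.length true).length :=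
    hv.length_le.lt_of_ne fun hl => hvW (hv.eq_of_length hl)
  have hpos : 0 < v.length := List.length_pos_iff.mpr hv0
  rw [List.suffix_iff_eq_drop.mp hv]
  refine h.lex_drop_append_replicate ha (by omega) ?_
  simp only [List.length_append, List.length_replicate] at hlt ⊢
  omega
end
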